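/- (Corollary 2, NO filtering) Let x be a sequence of length m and y a sequence of length n over a linearly ordered alphabet Σ, let q be an integer with 0 < q < m, and let j be an index with j + m ≤ n. If x ≈ y[j…j+m−1], then φ^q_x[i] = φ^q_y[j+i] for all 0 ≤ i < m − q. -/

import Mathlib

variable {α : Type*} [LinearOrder α]

/-- β_x(i,j) = 1 if x[i] ≥ x[j], 0 otherwise. -/
def beta {m : ℕ} (x : Fin m → α) (i j : Fin m) : ℕ :=
  if x j ≤ x i then 1 else 0

/-- The rank function ρ_x. -/
def rankFn {m : ℕ} (x : Fin m → α) (i : Fin m) : ℕ :=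
  (Finset.univ.filter fun j => x j < x i ∨ (x j = x i ∧ j < i)).card

/-- Order isomorphism of two sequences of the same length. -/
def OrderIsom {m : ℕ} (x y : Fin m → α) : Prop :=
  ∀ i j : Fin m, x i ≤ x j ↔ y i ≤ y j

/-- The q-neighborhood-ranking value χ^q_x[i]. -/
def chi {m : ℕ} (x : Fin m → α) (q i : ℕ) (h : i + q < m) : ℕ :=
  ∑ j : Fin q, beta x ⟨i, by omega⟩ ⟨i + (j.val + 1), by have := j.isLt; omega⟩ *
    2 ^ (q - (j.val + 1))

/-- The q-neighborhood-ordering value φ^q_x[i]. -/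
def phi {m : ℕ} (x : Fin m → α) (q i : ℕ) (h : i + q < m) : ℕ :=
  ∑ k : Fin q, chi x (k.val + 1) (i + q - (k.val + 1)) (by have := k.isLt; omega) *
    2 ^ ((k.val + 1) * k.val / 2)

/-! Both `χ` and `φ` are built from comparisons `β` alone, so they are invariant under order
isomorphism, and on the window `y[j…j+m−1]` they are those of `y` shifted by `j`. -/

/-- The substring `y[j…j+m−1]`. -/
def window {β : Type*} {m n : ℕ} (y : Fin n → β) (j : ℕ) (hj : j + m ≤ n) : Fin m → β :=
  fun l => y ⟨j + l.val, by omega⟩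

section

variable {m n : ℕ}

theorem beta_eq_of_orderIsom {x x' : Fin m → α} (h : OrderIsom x x') (i k : Fin m) :
    beta x i k = beta x' i k := by
  simp only [beta, h k i]

theorem chi_eq_of_orderIsom {x x' : Fin m → α} (h : OrderIsom x x') (q i : ℕ)
    (hi : i + q < m) : chi x q i hi = chi x' q i hi := by
  simp only [chi, beta_eq_of_orderIsom h]

theorem phi_eq_of_orderIsom {x x' : Fin m → α} (h : OrderIsom x x') (q i : ℕ)
    (hi : i + q < m) : phi x q i hi = phi x' q i hi := by
  simp only [phi, chi_eq_of_orderIsom h]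

theorem chi_window (y : Fin n → α) (j : ℕ) (hj : j + m ≤ n) (q i : ℕ) (hi : i + q < m) :
    chi (window y j hj) q i hi = chi y q (j + i) (by omega) := by
  simp only [chi, beta, window, Nat.add_assoc]
  rfl

theorem phi_window (y : Fin n → α) (j : ℕ) (hj : j + m ≤ n) (q i : ℕ) (hi : i + q < m) :
    phi (window y j hj) q i hi = phi y q (j + i) (by omega) := by
  refine Finset.sum_congr rfl fun k _ => ?_
  have hk := k.isLt
  have hshift : j + (i + q - (k.val + 1)) = j + i + q - (k.val + 1) := by omega
  rw [chi_window]
  simp only [hshift]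

end

/-- Corollary 2 (NO filtering): if `x ≈ y[j…j+m−1]` then `φ^q_x[i] = φ^q_y[j+i]`
for all `0 ≤ i < m − q`. -/
theorem phi_filter {m n : ℕ} (x : Fin m → α) (y : Fin n → α) (q : ℕ)
    (j : ℕ) (hj : j + m ≤ n)
    (h : OrderIsom x (fun l : Fin m => y ⟨j + l.val, by have := l.isLt; omega⟩)) :
    ∀ i : ℕ, ∀ hi : i + q < m, phi x q i hi = phi y q (j + i) (by omega) := by
  intro i hi
  exact (phi_eq_of_orderIsom (x' := window y j hj) h q i hi).trans (phi_window y j hj q i hi)
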